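/- arXiv:1905.04699 — 3 statements merged into one kernel-verified Lean document; each statement's English description precedes it below -/
import Mathlib

section
/- Let V = kx ⊕ ky over a field k of characteristic zero, and R = span{y⊗y, x⊗y + y⊗x, y⊗x + x⊗x} ⊆ V⊗V (the relations of the quadratic dual of the Jordan plane). If θ: R → k is a linear map with (θ⊗1 - 1⊗θ)(V⊗R ∩ R⊗V) = 0, then θ = 0. That is, the only Clifford map of this quadratic algebra is the trivial one. -/
open TensorProduct

noncomputable section

variable {k : Type*} [CommRing k] {V : Type*} [AddCommGroup V] [Module k V]

/-- `θ : R → k` is a Clifford map if `(θ ⊗ 1 - 1 ⊗ θ)(V⊗R ∩ R⊗V) = 0`: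
whenever an element of `V ⊗ V ⊗ V` lies both in `V ⊗ R` and in `R ⊗ V`,
applying `1 ⊗ θ` and `θ ⊗ 1` give the same element of `V`. -/
def IsCliffordMap (R : Submodule k (V ⊗[k] V)) (θ : ↥R →ₗ[k] k) : Prop :=
  ∀ (w : V ⊗[k] ↥R) (w' : ↥R ⊗[k] V),
    LinearMap.lTensor V R.subtype w =
      (TensorProduct.assoc k V V V) (LinearMap.rTensor V R.subtype w') →
    (TensorProduct.rid k V) (LinearMap.lTensor V θ w) =
      (TensorProduct.lid k V) (LinearMap.rTensor V θ w')

end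

/-! The relations `r₁ = y⊗y`, `r₂ = x⊗y + y⊗x`, `r₃ = y⊗x + x⊗x` give two elements of
`V⊗R ∩ R⊗V`:
`x⊗r₂ + y⊗(r₂ + r₃) = (2r₁ + r₂)⊗x + r₃⊗y` and `x⊗r₃ + y⊗(2r₃) = (2r₁ + r₂ + r₃)⊗x`.
Comparing the coefficients of `x` and `y` after applying `1⊗θ` and `θ⊗1` yields `2θ(r₁) = 0`,
`θ(r₂) = 0` and `2θ(r₃) = 0`, so `θ` vanishes on the generators of `R`. -/

theorem IsCliffordMap.smul_add_smul_eq {k : Type*} [CommRing k] {V : Type*} [AddCommGroup V]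
    [Module k V] {R : Submodule k (V ⊗[k] V)} {θ : ↥R →ₗ[k] k} (hθ : IsCliffordMap R θ)
    {a b c d : V} {r r' s s' : R}
    (h : a ⊗ₜ[k] (r : V ⊗[k] V) + b ⊗ₜ (r' : V ⊗[k] V) =
      TensorProduct.assoc k V V V ((s : V ⊗[k] V) ⊗ₜ c + (s' : V ⊗[k] V) ⊗ₜ d)) :
    θ r • a + θ r' • b = θ s • c + θ s' • d := by
  have := hθ (a ⊗ₜ r + b ⊗ₜ r') (s ⊗ₜ c + s' ⊗ₜ d) (by simpa using h)
  simpa only [map_add, LinearMap.lTensor_tmul, LinearMap.rTensor_tmul, rid_tmul, lid_tmul] using this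

theorem Submodule.linearMap_span_eq_zero_of_forall_mem {k M N : Type*} [Semiring k]
    [AddCommMonoid M] [Module k M] [AddCommMonoid N] [Module k N] {S : Set M}
    {f : Submodule.span k S →ₗ[k] N} (hf : ∀ s (hs : s ∈ S), f ⟨s, Submodule.subset_span hs⟩ = 0) :
    f = 0 :=
  LinearMap.ext_on (Submodule.span_span_coe_preimage) fun s hs => by simpa using hf s hs

theorem eq_and_eq_of_smul_single_add_smul_single_eq {k : Type*} [Semiring k] {a b c d : k}
    (h : a • Pi.single 0 1 + b • Pi.single 1 1 = (c • Pi.single 0 1 + d • Pi.single 1 1 : Fin 2 → k)) :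
    a = c ∧ b = d :=
  ⟨by simpa using congrFun h 0, by simpa using congrFun h 1⟩

/-- for the quadratic dual of the Jordan plane, with relations
`R = span{y⊗y, x⊗y + y⊗x, y⊗x + x⊗x}`, the only Clifford map is `θ = 0`. -/
theorem stmt3 (k : Type*) [Field k] [CharZero k]
    (x y : Fin 2 → k) (hx : x = Pi.single 0 1) (hy : y = Pi.single 1 1)
    (R : Submodule k ((Fin 2 → k) ⊗[k] (Fin 2 → k)))
    (hR : R = Submodule.span k {y ⊗ₜ[k] y, x ⊗ₜ[k] y + y ⊗ₜ[k] x, y ⊗ₜ[k] x + x ⊗ₜ[k] x})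
    (θ : ↥R →ₗ[k] k) (hθ : IsCliffordMap R θ) :
    θ = 0 := by
  let r₁ : R := ⟨y ⊗ₜ y, hR ▸ Submodule.subset_span (by simp)⟩
  let r₂ : R := ⟨x ⊗ₜ y + y ⊗ₜ x, hR ▸ Submodule.subset_span (by simp)⟩
  let r₃ : R := ⟨y ⊗ₜ x + x ⊗ₜ x, hR ▸ Submodule.subset_span (by simp)⟩
  have e₁ := hθ.smul_add_smul_eq (a := x) (b := y) (c := x) (d := y)
    (r := r₂) (r' := r₂ + r₃) (s := (2 : k) • r₁ + r₂) (s' := r₃) (by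
      simp only [r₁, r₂, r₃, Submodule.coe_add, Submodule.coe_smul, tmul_add, add_tmul, map_add,
        ← smul_tmul', map_smul, assoc_tmul]
      module)
  have e₂ := hθ.smul_add_smul_eq (a := x) (b := y) (c := x) (d := y)
    (r := r₃) (r' := (2 : k) • r₃) (s := (2 : k) • r₁ + r₂ + r₃) (s' := 0) (by
      simp only [r₁, r₂, r₃, Submodule.coe_add, Submodule.coe_smul, Submodule.coe_zero, tmul_add,
        add_tmul, map_add, ← smul_tmul', tmul_smul, map_smul, assoc_tmul,
        zero_tmul, add_zero]
      module)
  subst hx hy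
  obtain ⟨h₁, h₂⟩ := eq_and_eq_of_smul_single_add_smul_single_eq e₁
  obtain ⟨-, h₃⟩ := eq_and_eq_of_smul_single_add_smul_single_eq e₂
  simp only [map_add, map_smul, map_zero, smul_eq_mul] at h₁ h₂ h₃
  have hr₁ : θ r₁ = 0 := by simpa using h₁
  have hr₂ : θ r₂ = 0 := by simpa using h₂
  have hr₃ : θ r₃ = 0 := by simpa using h₃
  subst hR
  refine Submodule.linearMap_span_eq_zero_of_forall_mem ?_
  rintro s (rfl | rfl | rfl)
  exacts [hr₁, hr₂, hr₃]
end

section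
/- Let E = T(V)/(R) be a Koszul Frobenius algebra with Clifford map θ: R → k. Let Ṽ = V ⊕ kz and R̃ = R ⊕ span{x⊗z + z⊗x : x ∈ V} ⊕ k(z⊗z), so that the trivial extension Ẽ = T(Ṽ)/(R̃). Define θ̃: R̃ → k by θ̃|_R = θ, θ̃(z⊗z) = 1, θ̃(x⊗z + z⊗x) = 0 for x ∈ V. Then θ̃ is a Clifford map of Ẽ, i.e. (θ̃⊗1 - 1⊗θ̃)(Ṽ⊗R̃ ∩ R̃⊗Ṽ) = 0. -/
open TensorProduct

noncomputable section

/-- The linear map `V ⊗ V → T(V)` given by multiplication of the two generators. -/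
def mu (k : Type*) [CommRing k] (V : Type*) [AddCommGroup V] [Module k V] :
    V ⊗[k] V →ₗ[k] TensorAlgebra k V :=
  (LinearMap.mul' k (TensorAlgebra k V)).comp
    (TensorProduct.map (TensorAlgebra.ι k) (TensorAlgebra.ι k))

variable {k : Type*} [CommRing k] {V : Type*} [AddCommGroup V] [Module k V]

/-- The relation presenting the quadratic algebra `T(V)/(R)`. -/
inductive QuadRel (R : Submodule k (V ⊗[k] V)) :
    TensorAlgebra k V → TensorAlgebra k V → Prop
  | of (r : ↥R) : QuadRel R (mu k V (r : V ⊗[k] V)) 0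

/-- Backelin's criterion, used as definition: a quadratic algebra `T(V)/(R)` is Koszul iff
for each `n` the lattice of subspaces of `V^{⊗n}` generated by the subspaces
`V^{⊗i} ⊗ R ⊗ V^{⊗(n-2-i)}` is distributive. -/
def IsKoszul {k : Type*} [CommRing k] {V : Type*} [AddCommGroup V] [Module k V]
    (R : Submodule k (V ⊗[k] V)) : Prop :=
  ∀ n : ℕ,
    ∀ x ∈ latticeClosure {W : Submodule k (TensorAlgebra k V) | ∃ i, i + 2 ≤ n ∧
      W = (LinearMap.range (TensorAlgebra.ι k (M := V))) ^ i *
            Submodule.map (mu k V) R *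
            (LinearMap.range (TensorAlgebra.ι k (M := V))) ^ (n - 2 - i)},
    ∀ y ∈ latticeClosure {W : Submodule k (TensorAlgebra k V) | ∃ i, i + 2 ≤ n ∧
      W = (LinearMap.range (TensorAlgebra.ι k (M := V))) ^ i *
            Submodule.map (mu k V) R *
            (LinearMap.range (TensorAlgebra.ι k (M := V))) ^ (n - 2 - i)},
    ∀ z ∈ latticeClosure {W : Submodule k (TensorAlgebra k V) | ∃ i, i + 2 ≤ n ∧
      W = (LinearMap.range (TensorAlgebra.ι k (M := V))) ^ i *
            Submodule.map (mu k V) R *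
            (LinearMap.range (TensorAlgebra.ι k (M := V))) ^ (n - 2 - i)},
      x ⊓ (y ⊔ z) = (x ⊓ y) ⊔ (x ⊓ z)

end

/-!
Write `Ṽ = V × k`, so that `z = (0, 1)` and `z* = snd`. On `R̃` the contractions of the left and
of the right tensor factor with `z*` agree; call this common map `ζ : R̃ → Ṽ`. Then
`θ̃ = θ ∘ α + z* ∘ ζ`, where `α : R̃ → R` is the `V ⊗ V`-component, and since Clifford maps form a
submodule it suffices to treat the two summands.

For `w ∈ Ṽ ⊗ R̃ ∩ R̃ ⊗ Ṽ`, contracting the first, the middle or the last of its three factors with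
`z*` shows that the coefficient of `z ⊗ -` in `w ∈ Ṽ ⊗ R̃` equals the coefficient of `- ⊗ z` in
`w ∈ R̃ ⊗ Ṽ`. This settles `z* ∘ ζ` and the `z`-component of `θ ∘ α`. Projecting all three factors
to `V` sends `w` into `V ⊗ R ∩ R ⊗ V`, where `θ` is a Clifford map, which gives the `V`-component.
-/

namespace TensorProduct

variable {k : Type*} [CommRing k] {X Y Z M N N' A B C : Type*}
  [AddCommMonoid X] [Module k X] [AddCommMonoid Y] [Module k Y] [AddCommMonoid Z] [Module k Z]
  [AddCommMonoid M] [Module k M] [AddCommMonoid N] [Module k N] [AddCommMonoid N'] [Module k N']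
  [AddCommMonoid A] [Module k A] [AddCommMonoid B] [Module k B] [AddCommMonoid C] [Module k C]

section Contraction

variable (M) in
def lcontract (φ : X →ₗ[k] k) : X ⊗[k] M →ₗ[k] M :=
  (TensorProduct.lid k M).toLinearMap ∘ₗ φ.rTensor M

variable (M) in
def rcontract (φ : X →ₗ[k] k) : M ⊗[k] X →ₗ[k] M :=
  (TensorProduct.rid k M).toLinearMap ∘ₗ φ.lTensor M

@[simp] lemma lcontract_tmul (φ : X →ₗ[k] k) (x : X) (m : M) :
    lcontract M φ (x ⊗ₜ m) = φ x • m := rfl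

@[simp] lemma rcontract_tmul (φ : X →ₗ[k] k) (m : M) (x : X) :
    rcontract M φ (m ⊗ₜ x) = φ x • m := rfl

lemma lcontract_add (φ ψ : X →ₗ[k] k) :
    lcontract M (φ + ψ) = lcontract M φ + lcontract M ψ := by
  ext; simp [add_smul]

lemma rcontract_add (φ ψ : X →ₗ[k] k) :
    rcontract M (φ + ψ) = rcontract M φ + rcontract M ψ := by
  ext; simp [add_smul]

lemma lcontract_lTensor (φ : X →ₗ[k] k) (f : M →ₗ[k] N) (w : X ⊗[k] M) :
    lcontract N φ (f.lTensor X w) = f (lcontract M φ w) :=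
  w.induction_on (by simp) (fun _ _ => by simp) fun _ _ h₁ h₂ => by simp [h₁, h₂]

lemma lcontract_rTensor (φ : Y →ₗ[k] k) (f : X →ₗ[k] Y) (w : X ⊗[k] M) :
    lcontract M φ (f.rTensor M w) = lcontract M (φ ∘ₗ f) w :=
  w.induction_on (by simp) (fun _ _ => by simp) fun _ _ h₁ h₂ => by simp [h₁, h₂]

lemma rcontract_lTensor (φ : Y →ₗ[k] k) (f : X →ₗ[k] Y) (w : M ⊗[k] X) :
    rcontract M φ (f.lTensor M w) = rcontract M (φ ∘ₗ f) w :=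
  w.induction_on (by simp) (fun _ _ => by simp) fun _ _ h₁ h₂ => by simp [h₁, h₂]

lemma rcontract_rTensor (φ : X →ₗ[k] k) (f : M →ₗ[k] N) (w : M ⊗[k] X) :
    rcontract N φ (f.rTensor X w) = f (rcontract M φ w) :=
  w.induction_on (by simp) (fun _ _ => by simp) fun _ _ h₁ h₂ => by simp [h₁, h₂]

lemma apply_rcontract (ψ : M →ₗ[k] k) (φ : N →ₗ[k] k) (w : M ⊗[k] N) :
    ψ (rcontract M φ w) = φ (lcontract N ψ w) :=
  w.induction_on (by simp) (fun _ _ => by simp [mul_comm]) fun _ _ h₁ h₂ => by simp [h₁, h₂]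

lemma apply_lcontract (ψ : M →ₗ[k] k) (φ : N →ₗ[k] k) (w : N ⊗[k] M) :
    ψ (lcontract M φ w) = φ (rcontract N ψ w) :=
  w.induction_on (by simp) (fun _ _ => by simp [mul_comm]) fun _ _ h₁ h₂ => by simp [h₁, h₂]

lemma lcontract_assoc (φ : X →ₗ[k] k) (x : X ⊗[k] Y ⊗[k] Z) :
    lcontract (Y ⊗[k] Z) φ (TensorProduct.assoc k X Y Z x) = (lcontract Y φ).rTensor Z x :=
  DFunLike.congr_fun (ext_threefold
    (g := lcontract (Y ⊗[k] Z) φ ∘ₗ (TensorProduct.assoc k X Y Z).toLinearMap)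
    fun _ _ _ => by simp [smul_tmul']) x

lemma lTensor_rcontract_assoc (φ : Z →ₗ[k] k) (x : X ⊗[k] Y ⊗[k] Z) :
    (rcontract Y φ).lTensor X (TensorProduct.assoc k X Y Z x) = rcontract (X ⊗[k] Y) φ x :=
  DFunLike.congr_fun (ext_threefold
    (g := (rcontract Y φ).lTensor X ∘ₗ (TensorProduct.assoc k X Y Z).toLinearMap)
    fun _ _ _ => by simp [tmul_smul]) x

lemma lTensor_lcontract_assoc (φ : Y →ₗ[k] k) (x : X ⊗[k] Y ⊗[k] Z) :
    (lcontract Z φ).lTensor X (TensorProduct.assoc k X Y Z x) = (rcontract X φ).rTensor Z x :=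
  DFunLike.congr_fun (ext_threefold
    (g := (lcontract Z φ).lTensor X ∘ₗ (TensorProduct.assoc k X Y Z).toLinearMap)
    fun _ _ _ => by simp [tmul_smul, smul_tmul']) x

end Contraction

/-- For `ι = ι'` the inclusion of `R ⊆ V ⊗ V`, such pairs `(w, w')` are the elements of
`V ⊗ R ∩ R ⊗ V`. -/
def Overlap (ι : N →ₗ[k] Y ⊗[k] Z) (ι' : N' →ₗ[k] X ⊗[k] Y) (w : X ⊗[k] N) (w' : N' ⊗[k] Z) :
    Prop :=
  ι.lTensor X w = TensorProduct.assoc k X Y Z (ι'.rTensor Z w')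

namespace Overlap

variable {ι : N →ₗ[k] Y ⊗[k] Z} {ι' : N' →ₗ[k] X ⊗[k] Y} {w : X ⊗[k] N} {w' : N' ⊗[k] Z}

theorem lcontract_left (h : Overlap ι ι' w w') (φ : X →ₗ[k] k) :
    ι (lcontract N φ w) = (lcontract Y φ ∘ₗ ι').rTensor Z w' := by
  have := congrArg (lcontract (Y ⊗[k] Z) φ) h
  rwa [lcontract_lTensor, lcontract_assoc, ← LinearMap.rTensor_comp_apply] at this

theorem rcontract_right (h : Overlap ι ι' w w') (φ : Z →ₗ[k] k) :
    (rcontract Y φ ∘ₗ ι).lTensor X w = ι' (rcontract N' φ w') := by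
  have := congrArg ((rcontract Y φ).lTensor X) h
  rwa [← LinearMap.lTensor_comp_apply, lTensor_rcontract_assoc, rcontract_rTensor] at this

theorem contract_middle (h : Overlap ι ι' w w') (φ : Y →ₗ[k] k) :
    (lcontract Z φ ∘ₗ ι).lTensor X w = (rcontract X φ ∘ₗ ι').rTensor Z w' := by
  have := congrArg ((lcontract Z φ).lTensor X) h
  rwa [← LinearMap.lTensor_comp_apply, lTensor_lcontract_assoc,
    ← LinearMap.rTensor_comp_apply] at this

theorem map (h : Overlap ι ι' w w') (f : X →ₗ[k] A) (g : Y →ₗ[k] B) (e : Z →ₗ[k] C) :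
    TensorProduct.map f (TensorProduct.map g e ∘ₗ ι) w =
      TensorProduct.assoc k A B C (TensorProduct.map (TensorProduct.map f g ∘ₗ ι') e w') := by
  have := congrArg (TensorProduct.map f (TensorProduct.map g e)) h
  rwa [map_map_assoc, LinearMap.map_lTensor, LinearMap.map_rTensor] at this

end Overlap

end TensorProduct

section CliffordMap

open TensorProduct

variable {k : Type*} [CommRing k] {X Y : Type*} [AddCommGroup X] [Module k X]
  [AddCommGroup Y] [Module k Y]

theorem isCliffordMap_iff {S : Submodule k (X ⊗[k] X)} {θ : S →ₗ[k] k} :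
    IsCliffordMap S θ ↔
      ∀ w w', Overlap S.subtype S.subtype w w' → rcontract X θ w = lcontract X θ w' :=
  Iff.rfl

theorem IsCliffordMap.add {S : Submodule k (X ⊗[k] X)} {θ₁ θ₂ : S →ₗ[k] k}
    (h₁ : IsCliffordMap S θ₁) (h₂ : IsCliffordMap S θ₂) : IsCliffordMap S (θ₁ + θ₂) := by
  rw [isCliffordMap_iff] at *
  intro w w' h
  simp only [rcontract_add, lcontract_add, LinearMap.add_apply, h₁ w w' h, h₂ w w' h]

theorem TensorProduct.Overlap.lcontract_eq_rcontract {S : Submodule k (X ⊗[k] X)}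
    {ψ : X →ₗ[k] k} (hψ : lcontract X ψ ∘ₗ S.subtype = rcontract X ψ ∘ₗ S.subtype)
    {w : X ⊗[k] S} {w' : S ⊗[k] X} (h : Overlap S.subtype S.subtype w w') :
    lcontract S ψ w = rcontract S ψ w' :=
  Subtype.ext <| calc
    S.subtype (lcontract S ψ w) = (lcontract X ψ ∘ₗ S.subtype).rTensor X w' := h.lcontract_left ψ
    _ = (rcontract X ψ ∘ₗ S.subtype).rTensor X w' := by rw [hψ]
    _ = (lcontract X ψ ∘ₗ S.subtype).lTensor X w := (h.contract_middle ψ).symm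
    _ = (rcontract X ψ ∘ₗ S.subtype).lTensor X w := by rw [hψ]
    _ = S.subtype (rcontract S ψ w') := h.rcontract_right ψ

theorem isCliffordMap_comp_lcontract {S : Submodule k (X ⊗[k] X)} {ψ : X →ₗ[k] k}
    (hψ : lcontract X ψ ∘ₗ S.subtype = rcontract X ψ ∘ₗ S.subtype) :
    IsCliffordMap S (ψ ∘ₗ lcontract X ψ ∘ₗ S.subtype) := by
  rw [isCliffordMap_iff]
  intro w w' h
  set ζ := lcontract X ψ ∘ₗ S.subtype
  have hζ : ζ.lTensor X w = ζ.rTensor X w' := by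
    simpa only [← hψ] using h.contract_middle ψ
  calc rcontract X (ψ ∘ₗ ζ) w
      = rcontract X ψ (ζ.rTensor X w') := by rw [← hζ, rcontract_lTensor]
    _ = ζ (lcontract S ψ w) := by rw [rcontract_rTensor, h.lcontract_eq_rcontract hψ]
    _ = lcontract X (ψ ∘ₗ ζ) w' := by rw [← lcontract_lTensor, hζ, lcontract_rTensor]

theorem IsCliffordMap.apply_rcontract_comp_eq {S : Submodule k (X ⊗[k] X)}
    {R : Submodule k (Y ⊗[k] Y)} {θ : R →ₗ[k] k} (hθ : IsCliffordMap R θ) {f : X →ₗ[k] Y}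
    {a : S →ₗ[k] R} (ha : R.subtype ∘ₗ a = map f f ∘ₗ S.subtype)
    {w : X ⊗[k] S} {w' : S ⊗[k] X} (h : Overlap S.subtype S.subtype w w') :
    f (rcontract X (θ ∘ₗ a) w) = f (lcontract X (θ ∘ₗ a) w') := by
  have hR : Overlap R.subtype R.subtype (a.lTensor Y (f.rTensor S w))
      (a.rTensor Y (f.lTensor S w')) := by
    have := h.map f f f
    rw [← ha, ← LinearMap.lTensor_comp_map, ← LinearMap.rTensor_comp_map,
      ← LinearMap.lTensor_comp_rTensor, ← LinearMap.rTensor_comp_lTensor] at this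
    simp only [LinearMap.comp_apply] at this
    exact this
  calc f (rcontract X (θ ∘ₗ a) w)
      = rcontract Y θ (a.lTensor Y (f.rTensor S w)) := by
        rw [rcontract_lTensor, rcontract_rTensor]
    _ = lcontract Y θ (a.rTensor Y (f.lTensor S w')) := hθ _ _ hR
    _ = f (lcontract X (θ ∘ₗ a) w') := by rw [lcontract_rTensor, lcontract_lTensor]

end CliffordMap

section TrivialExtension

open TensorProduct LinearMap

variable {k : Type*} [CommRing k] {V : Type*} [AddCommGroup V] [Module k V]

theorem IsCliffordMap.comp_of_map_fst {R : Submodule k (V ⊗[k] V)} {θ : R →ₗ[k] k}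
    (hθ : IsCliffordMap R θ) {S : Submodule k ((V × k) ⊗[k] (V × k))}
    (hS : lcontract (V × k) (snd k V k) ∘ₗ S.subtype = rcontract (V × k) (snd k V k) ∘ₗ S.subtype)
    {a : S →ₗ[k] R} (ha : R.subtype ∘ₗ a = map (fst k V k) (fst k V k) ∘ₗ S.subtype) :
    IsCliffordMap S (θ ∘ₗ a) := by
  rw [isCliffordMap_iff]
  intro w w' h
  ext
  · exact hθ.apply_rcontract_comp_eq ha h
  · change snd k V k _ = snd k V k _
    rw [apply_rcontract, apply_lcontract (snd k V k), h.lcontract_eq_rcontract hS]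

lemma map_fst_map_inl (y : V ⊗[k] V) :
    map (fst k V k) (fst k V k) (map (inl k V k) (inl k V k) y) = y := by
  simp [TensorProduct.map_map]

lemma lcontract_snd_map_inl (y : V ⊗[k] V) :
    lcontract (V × k) (snd k V k) (map (inl k V k) (inl k V k) y) = 0 :=
  y.induction_on (by simp) (fun _ _ => by simp) fun _ _ h₁ h₂ => by simp [h₁, h₂]

lemma rcontract_snd_map_inl (y : V ⊗[k] V) :
    rcontract (V × k) (snd k V k) (map (inl k V k) (inl k V k) y) = 0 :=
  y.induction_on (by simp) (fun _ _ => by simp) fun _ _ h₁ h₂ => by simp [h₁, h₂]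

variable (R : Submodule k (V ⊗[k] V))

def trivialExtensionRel : Submodule k ((V × k) ⊗[k] (V × k)) :=
  Submodule.map (map (inl k V k) (inl k V k)) R ⊔
    Submodule.span k {t | ∃ x : V,
      t = inl k V k x ⊗ₜ[k] ((0, 1) : V × k) + ((0, 1) : V × k) ⊗ₜ[k] inl k V k x} ⊔
    Submodule.span k {((0, 1) : V × k) ⊗ₜ[k] ((0, 1) : V × k)}

theorem trivialExtensionRel_eq_span : trivialExtensionRel R =
    Submodule.span k (map (inl k V k) (inl k V k) '' R ∪
      {t | ∃ x : V, t = inl k V k x ⊗ₜ[k] ((0, 1) : V × k) + ((0, 1) : V × k) ⊗ₜ[k] inl k V k x} ∪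
      {((0, 1) : V × k) ⊗ₜ[k] ((0, 1) : V × k)}) := by
  rw [Submodule.span_union, Submodule.span_union, Submodule.span_image, Submodule.span_eq]
  rfl

theorem map_fst_mem_of_mem_trivialExtensionRel {t : (V × k) ⊗[k] (V × k)}
    (ht : t ∈ trivialExtensionRel R) : map (fst k V k) (fst k V k) t ∈ R := by
  have : trivialExtensionRel R ≤ R.comap (map (fst k V k) (fst k V k)) := by
    rw [trivialExtensionRel_eq_span, Submodule.span_le]
    rintro _ ((⟨y, hy, rfl⟩ | ⟨x, rfl⟩) | rfl)
    · simpa [map_fst_map_inl] using hy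
    all_goals simp
  exact this ht

theorem trivialExtensionRel_lcontract_snd_eq_rcontract_snd :
    lcontract (V × k) (snd k V k) ∘ₗ (trivialExtensionRel R).subtype =
      rcontract (V × k) (snd k V k) ∘ₗ (trivialExtensionRel R).subtype := by
  rw [Submodule.linearMap_eq_iff_of_eq_span _ _ (trivialExtensionRel_eq_span R)]
  rintro ⟨_, (⟨y, -, rfl⟩ | ⟨x, rfl⟩) | rfl⟩ <;>
    simp [lcontract_snd_map_inl, rcontract_snd_map_inl]

def trivialExtensionRelFst : trivialExtensionRel R →ₗ[k] R :=
  (map (fst k V k) (fst k V k) ∘ₗ (trivialExtensionRel R).subtype).codRestrict R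
    fun t => map_fst_mem_of_mem_trivialExtensionRel R t.2

lemma trivialExtensionRelFst_apply (t : trivialExtensionRel R) :
    trivialExtensionRelFst R t =
      ⟨map (fst k V k) (fst k V k) t, map_fst_mem_of_mem_trivialExtensionRel R t.2⟩ :=
  rfl

theorem eq_comp_trivialExtensionRelFst_add {θ : R →ₗ[k] k} {θt : trivialExtensionRel R →ₗ[k] k}
    (hθtR : ∀ r : R, ∀ h : map (inl k V k) (inl k V k) (r : V ⊗[k] V) ∈ trivialExtensionRel R,
      θt ⟨_, h⟩ = θ r)
    (hθtz : ∀ h : ((0, 1) : V × k) ⊗ₜ[k] ((0, 1) : V × k) ∈ trivialExtensionRel R,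
      θt ⟨_, h⟩ = 1)
    (hθtmix : ∀ x : V, ∀ h : inl k V k x ⊗ₜ[k] ((0, 1) : V × k) +
      ((0, 1) : V × k) ⊗ₜ[k] inl k V k x ∈ trivialExtensionRel R, θt ⟨_, h⟩ = 0) :
    θt = θ ∘ₗ trivialExtensionRelFst R +
      snd k V k ∘ₗ lcontract (V × k) (snd k V k) ∘ₗ (trivialExtensionRel R).subtype := by
  rw [Submodule.linearMap_eq_iff_of_eq_span _ _ (trivialExtensionRel_eq_span R)]
  rintro ⟨_, (⟨y, hy, rfl⟩ | ⟨x, rfl⟩) | rfl⟩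
  · rw [hθtR ⟨y, hy⟩]
    simp [trivialExtensionRelFst_apply, map_fst_map_inl, lcontract_snd_map_inl]
  · rw [hθtmix x]
    simp [trivialExtensionRelFst_apply, ← R.zero_def]
  · rw [hθtz]
    simp [trivialExtensionRelFst_apply, ← R.zero_def]

end TrivialExtension

open TensorProduct in
theorem stmt12_general (k : Type*) [Field k]
    (V : Type*) [AddCommGroup V] [Module k V]
    (R : Submodule k (V ⊗[k] V))
    (θ : ↥R →ₗ[k] k) (hθ : IsCliffordMap R θ)
    (z : V × k) (hzdef : z = (0, 1))
    (Rt : Submodule k ((V × k) ⊗[k] (V × k)))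
    (hRt : Rt = Submodule.map (TensorProduct.map (LinearMap.inl k V k) (LinearMap.inl k V k)) R ⊔
      Submodule.span k {t | ∃ x : V,
        t = (LinearMap.inl k V k x) ⊗ₜ[k] z + z ⊗ₜ[k] (LinearMap.inl k V k x)} ⊔
      Submodule.span k {z ⊗ₜ[k] z})
    (θt : ↥Rt →ₗ[k] k)
    (hθtR : ∀ r : ↥R,
      ∀ h : (TensorProduct.map (LinearMap.inl k V k) (LinearMap.inl k V k)) (r : V ⊗[k] V) ∈ Rt,
      θt ⟨_, h⟩ = θ r)
    (hθtz : ∀ h : z ⊗ₜ[k] z ∈ Rt, θt ⟨z ⊗ₜ[k] z, h⟩ = 1)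
    (hθtmix : ∀ x : V,
      ∀ h : (LinearMap.inl k V k x) ⊗ₜ[k] z + z ⊗ₜ[k] (LinearMap.inl k V k x) ∈ Rt,
      θt ⟨_, h⟩ = 0) :
    IsCliffordMap Rt θt := by
  subst hzdef
  change Rt = trivialExtensionRel R at hRt
  subst hRt
  have hsymm := trivialExtensionRel_lcontract_snd_eq_rcontract_snd R
  rw [eq_comp_trivialExtensionRelFst_add R hθtR hθtz hθtmix]
  exact (hθ.comp_of_map_fst hsymm (LinearMap.subtype_comp_codRestrict _ _ _)).add
    (isCliffordMap_comp_lcontract hsymm)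

open TensorProduct in
/-- Let `E = T(V)/(R)` be Koszul Frobenius with Clifford map `θ`.  On
`Ṽ = V ⊕ kz`, with `R̃ = R ⊕ span{x⊗z + z⊗x : x ∈ V} ⊕ k(z⊗z)` (the relations of the
trivial extension `Ẽ`), the extension `θ̃` of `θ` with `θ̃(z⊗z) = 1` and
`θ̃(x⊗z + z⊗x) = 0` is a Clifford map of `Ẽ`. -/
theorem stmt12 (k : Type*) [Field k] [CharZero k]
    (V : Type*) [AddCommGroup V] [Module k V] [FiniteDimensional k V]
    (R : Submodule k (V ⊗[k] V))
    (hKoszul : IsKoszul R) (hEfd : FiniteDimensional k (RingQuot (QuadRel R)))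
    (θ : ↥R →ₗ[k] k) (hθ : IsCliffordMap R θ)
    (z : V × k) (hzdef : z = (0, 1))
    (Rt : Submodule k ((V × k) ⊗[k] (V × k)))
    (hRt : Rt = Submodule.map (TensorProduct.map (LinearMap.inl k V k) (LinearMap.inl k V k)) R ⊔
      Submodule.span k {t | ∃ x : V,
        t = (LinearMap.inl k V k x) ⊗ₜ[k] z + z ⊗ₜ[k] (LinearMap.inl k V k x)} ⊔
      Submodule.span k {z ⊗ₜ[k] z})
    (θt : ↥Rt →ₗ[k] k)
    (hθtR : ∀ r : ↥R,
      ∀ h : (TensorProduct.map (LinearMap.inl k V k) (LinearMap.inl k V k)) (r : V ⊗[k] V) ∈ Rt,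
      θt ⟨_, h⟩ = θ r)
    (hθtz : ∀ h : z ⊗ₜ[k] z ∈ Rt, θt ⟨z ⊗ₜ[k] z, h⟩ = 1)
    (hθtmix : ∀ x : V,
      ∀ h : (LinearMap.inl k V k x) ⊗ₜ[k] z + z ⊗ₜ[k] (LinearMap.inl k V k x) ∈ Rt,
      θt ⟨_, h⟩ = 0) :
    IsCliffordMap Rt θt :=
  stmt12_general k V R θ hθ z hzdef Rt hRt θt hθtR hθtz hθtmix
end

section
/- Let B = T(V)/(R) be a quadratic algebra with central regular element z ∈ B_2, such that E = B/Bz = T(V)/(R') with R' = kr₀ ⊕ R where π(r₀) = z. Define θ: R' → k by θ(r₀) = 1 and θ|_R = 0. Then θ is a Clifford map of E, i.e. (θ⊗1 - 1⊗θ)(V⊗R' ∩ R'⊗V) = 0. -/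
open TensorProduct

/-!
In `B`, every relation of `R' = k r₀ ⊕ R` becomes a multiple of `z`: `π(x) = θ(x) z`. Multiplying
out an element of `V ⊗ R' ∩ R' ⊗ V` in `B` in its two presentations therefore gives
`(1 ⊗ θ)(α) z = z (θ ⊗ 1)(α)`. Since `z` is central and right regular, the two vectors of `V` agree
in `B`, hence in `V` because `V → B` is injective.
-/

section MulMap

variable {k : Type*} [CommRing k] {M N A : Type*} [AddCommGroup M] [Module k M]
  [AddCommGroup N] [Module k N] [Semiring A] [Algebra k A]

def LinearMap.mulMap (f : M →ₗ[k] A) (g : N →ₗ[k] A) : M ⊗[k] N →ₗ[k] A :=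
  LinearMap.mul' k A ∘ₗ TensorProduct.map f g

namespace LinearMap

@[simp]
theorem mulMap_tmul (f : M →ₗ[k] A) (g : N →ₗ[k] A) (m : M) (n : N) :
    f.mulMap g (m ⊗ₜ n) = f m * g n := rfl

theorem mulMap_mulMap_comp_assoc {P : Type*} [AddCommGroup P] [Module k P]
    (f : M →ₗ[k] A) (g : N →ₗ[k] A) (h : P →ₗ[k] A) :
    f.mulMap (g.mulMap h) ∘ₗ (TensorProduct.assoc k M N P).toLinearMap = (f.mulMap g).mulMap h :=
  TensorProduct.ext_threefold fun a b c => by simp [mul_assoc]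

end LinearMap

theorem AlgHom.toLinearMap_comp_mulMap {B : Type*} [Semiring B] [Algebra k B] (φ : A →ₐ[k] B)
    (f : M →ₗ[k] A) (g : N →ₗ[k] A) :
    φ.toLinearMap ∘ₗ f.mulMap g = (φ.toLinearMap ∘ₗ f).mulMap (φ.toLinearMap ∘ₗ g) :=
  TensorProduct.ext' fun m n => by simp

variable {V : Type*} [AddCommGroup V] [Module k V] {R' : Submodule k (V ⊗[k] V)}
  {θ : ↥R' →ₗ[k] k} {ι : V →ₗ[k] A} {z : A}

namespace LinearMap

theorem mulMap_lTensor_subtype (hz : ∀ x : R', ι.mulMap ι x = θ x • z) (w : V ⊗[k] R') :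
    ι.mulMap (ι.mulMap ι) (lTensor V R'.subtype w) =
      ι (TensorProduct.rid k V (lTensor V θ w)) * z := by
  induction w using TensorProduct.induction_on with
  | zero => simp
  | tmul v x => simp [hz]
  | add w₁ w₂ h₁ h₂ => simp only [map_add, add_mul, h₁, h₂]

theorem mulMap_rTensor_subtype (hz : ∀ x : R', ι.mulMap ι x = θ x • z) (w : R' ⊗[k] V) :
    (ι.mulMap ι).mulMap ι (rTensor V R'.subtype w) =
      z * ι (TensorProduct.lid k V (rTensor V θ w)) := by
  induction w using TensorProduct.induction_on with
  | zero => simp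
  | tmul x v => simp [hz]
  | add w₁ w₂ h₁ h₂ => simp only [map_add, mul_add, h₁, h₂]

end LinearMap

theorem IsCliffordMap.of_mulMap_eq_smul (hz : ∀ x : R', ι.mulMap ι x = θ x • z)
    (hcomm : ∀ v, Commute z (ι v)) (hreg : IsRightRegular z) (hι : Function.Injective ι) :
    IsCliffordMap R' θ := by
  intro w w' hww'
  apply hι
  apply hreg
  calc _ = ι.mulMap (ι.mulMap ι) (LinearMap.lTensor V R'.subtype w) :=
        (LinearMap.mulMap_lTensor_subtype hz w).symm
    _ = ι.mulMap (ι.mulMap ι)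
          (TensorProduct.assoc k V V V (LinearMap.rTensor V R'.subtype w')) := by rw [hww']
    _ = (ι.mulMap ι).mulMap ι (LinearMap.rTensor V R'.subtype w') :=
        LinearMap.congr_fun (LinearMap.mulMap_mulMap_comp_assoc ι ι ι) _
    _ = z * ι (TensorProduct.lid k V (LinearMap.rTensor V θ w')) :=
        LinearMap.mulMap_rTensor_subtype hz w'
    _ = _ := (hcomm _).eq

end MulMap

theorem LinearMap.apply_eq_smul_of_mem_span_singleton_sup {k M N : Type*} [CommRing k]
    [AddCommGroup M] [Module k M] [AddCommGroup N] [Module k N] (f : M →ₗ[k] N)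
    {r₀ : M} {R R' : Submodule k M} (hR' : R' = Submodule.span k {r₀} ⊔ R)
    (hf : ∀ r ∈ R, f r = 0) (θ : ↥R' →ₗ[k] k)
    (hθr₀ : ∀ h : r₀ ∈ R', θ ⟨r₀, h⟩ = 1) (hθR : ∀ r ∈ R, ∀ h : r ∈ R', θ ⟨r, h⟩ = 0)
    (x : R') : f x = θ x • f r₀ := by
  subst hR'
  obtain ⟨x, hx⟩ := x
  obtain ⟨_, hy, r, hr, rfl⟩ := Submodule.mem_sup.mp hx
  obtain ⟨c, rfl⟩ := Submodule.mem_span_singleton.mp hy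
  have hr₀ : r₀ ∈ Submodule.span k {r₀} ⊔ R :=
    Submodule.mem_sup_left (Submodule.mem_span_singleton_self r₀)
  have hx : (⟨c • r₀ + r, hx⟩ : ↥(Submodule.span k {r₀} ⊔ R)) =
      c • ⟨r₀, hr₀⟩ + ⟨r, Submodule.mem_sup_right hr⟩ := rfl
  rw [hx, map_add, map_smul, hθr₀, hθR r hr]
  simp [hf r hr]

theorem stmt15_general (k : Type*) [Field k]
    (V : Type*) [AddCommGroup V] [Module k V]
    (R : Submodule k (V ⊗[k] V)) (r₀ : V ⊗[k] V)
    (z : RingQuot (QuadRel R))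
    (hz : z = RingQuot.mkAlgHom k (QuadRel R) (mu k V r₀))
    (hcentral : ∀ b : RingQuot (QuadRel R), z * b = b * z)
    (hregr : ∀ b : RingQuot (QuadRel R), b * z = 0 → b = 0)
    (hinj : ∀ v : V, RingQuot.mkAlgHom k (QuadRel R) (TensorAlgebra.ι k v) = 0 → v = 0)
    (R' : Submodule k (V ⊗[k] V)) (hR' : R' = Submodule.span k {r₀} ⊔ R)
    (θ : ↥R' →ₗ[k] k)
    (hθr₀ : ∀ h : r₀ ∈ R', θ ⟨r₀, h⟩ = 1)
    (hθR : ∀ r ∈ R, ∀ h : r ∈ R', θ ⟨r, h⟩ = 0) :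
    IsCliffordMap R' θ := by
  set π := (RingQuot.mkAlgHom k (QuadRel R)).toLinearMap
  have hmu : π ∘ₗ mu k V = (π ∘ₗ TensorAlgebra.ι k).mulMap (π ∘ₗ TensorAlgebra.ι k) :=
    AlgHom.toLinearMap_comp_mulMap _ _ _
  have hπR : ∀ r ∈ R, (π ∘ₗ mu k V) r = 0 := fun r hr =>
    (RingQuot.mkAlgHom_rel k (QuadRel.of ⟨r, hr⟩)).trans (map_zero _)
  refine IsCliffordMap.of_mulMap_eq_smul (z := z) (fun x => ?_) (fun v => hcentral _)
    (isRightRegular_iff_left_eq_zero_of_mul.mpr hregr)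
    ((injective_iff_map_eq_zero (π ∘ₗ TensorAlgebra.ι k)).mpr hinj)
  rw [← hmu, (π ∘ₗ mu k V).apply_eq_smul_of_mem_span_singleton_sup hR' hπR θ hθr₀ hθR, hz]
  rfl

/-- Let `B = T(V)/(R)` be quadratic with central regular element
`z = π(r₀) ∈ B₂`, and `E = B/Bz = T(V)/(R')` with `R' = kr₀ ⊕ R`.  Then the linear map
`θ : R' → k` with `θ(r₀) = 1` and `θ|_R = 0` is a Clifford map of `E`. -/
theorem stmt15 (k : Type*) [Field k] [CharZero k]
    (V : Type*) [AddCommGroup V] [Module k V] [FiniteDimensional k V]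
    (R : Submodule k (V ⊗[k] V)) (r₀ : V ⊗[k] V)
    (hdisj : Submodule.span k {r₀} ⊓ R = ⊥)
    (z : RingQuot (QuadRel R))
    (hz : z = RingQuot.mkAlgHom k (QuadRel R) (mu k V r₀))
    (hcentral : ∀ b : RingQuot (QuadRel R), z * b = b * z)
    (hregl : ∀ b : RingQuot (QuadRel R), z * b = 0 → b = 0)
    (hregr : ∀ b : RingQuot (QuadRel R), b * z = 0 → b = 0)
    (hinj : ∀ v : V, RingQuot.mkAlgHom k (QuadRel R) (TensorAlgebra.ι k v) = 0 → v = 0)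
    (R' : Submodule k (V ⊗[k] V)) (hR' : R' = Submodule.span k {r₀} ⊔ R)
    (θ : ↥R' →ₗ[k] k)
    (hθr₀ : ∀ h : r₀ ∈ R', θ ⟨r₀, h⟩ = 1)
    (hθR : ∀ r ∈ R, ∀ h : r ∈ R', θ ⟨r, h⟩ = 0) :
    IsCliffordMap R' θ :=
  stmt15_general k V R r₀ z hz hcentral hregr hinj R' hR' θ hθr₀ hθR
end
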